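/- arXiv:2211.16500 — 2 statements merged into one kernel-verified Lean document; each statement's English description precedes it below -/
import Mathlib

section
/- Let d ≥ 1 and let ‖·‖ denote the ℓ¹-norm on ℤ^d. There exists a constant C = C(d) > 0 such that for every finite set V ⊆ ℤ^d with |V| ≥ 2 and every x ∈ ℤ^d, the sum ∑_{y ∈ V, y ≠ x} ‖x - y‖^{-d} ≤ C log|V|. -/
lemma rank_lt {α : Type*} [DecidableEq α] (S : Finset α) (D : α → ℕ) (e : α ↪ ℕ)
    {a b : α} (hb : b ∈ S) (h : D a < D b ∨ (D a = D b ∧ e a < e b)) :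
    (S.filter fun z => D z < D a ∨ (D z = D a ∧ e z ≤ e a)).card <
    (S.filter fun z => D z < D b ∨ (D z = D b ∧ e z ≤ e b)).card := by
  classical
  apply Finset.card_lt_card
  have hsub : (S.filter fun z => D z < D a ∨ (D z = D a ∧ e z ≤ e a)) ⊆
      (S.filter fun z => D z < D b ∨ (D z = D b ∧ e z ≤ e b)) := by
    intro z hz
    rw [Finset.mem_filter] at hz ⊢
    refine ⟨hz.1, ?_⟩
    rcases hz.2 with h1 | ⟨h1, h2⟩ <;> rcases h with h3 | ⟨h3, h4⟩ <;> omega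
  rw [Finset.ssubset_iff_of_subset hsub]
  refine ⟨b, Finset.mem_filter.mpr ⟨hb, Or.inr ⟨rfl, le_rfl⟩⟩, ?_⟩
  intro hmem
  rw [Finset.mem_filter] at hmem
  rcases hmem.2 with h1 | ⟨h1, h2⟩ <;> rcases h with h3 | ⟨h3, h4⟩ <;> omega

set_option maxHeartbeats 1000000 in
/-- Upper bound on the weight of a site relative to a finite set:
`∑_{y ∈ V, y ≠ x} ‖x - y‖₁^{-d} ≤ C log |V|`. -/
theorem stmt_2 (d : ℕ) (hd : 1 ≤ d) :
    ∃ C : ℝ, 0 < C ∧ ∀ (V : Finset (Fin d → ℤ)), 2 ≤ V.card →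
      ∀ x : Fin d → ℤ,
        ∑ y ∈ V.erase x, (1 : ℝ) / (∑ i, ((x i - y i).natAbs : ℝ)) ^ d
          ≤ C * Real.log V.card := by
  classical
  obtain ⟨e⟩ := nonempty_embedding_nat (Fin d → ℤ)
  have hlog2 : (0:ℝ) < Real.log 2 := Real.log_pos (by norm_num)
  refine ⟨3 ^ d * (1 + 1 / Real.log 2), by positivity, ?_⟩
  intro V hV x
  set S : Finset (Fin d → ℤ) := V.erase x with hS
  set D : (Fin d → ℤ) → ℕ := fun y => ∑ i, (x i - y i).natAbs with hDdef
  set r : (Fin d → ℤ) → ℕ :=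
    fun y => (S.filter fun z => D z < D y ∨ (D z = D y ∧ e z ≤ e y)).card with hrdef
  have hD1 : ∀ y ∈ S, 1 ≤ D y := by
    intro y hy
    rcases Finset.mem_erase.mp hy with ⟨hne, _⟩
    by_contra h
    push_neg at h
    have h0 : D y = 0 := by omega
    apply hne
    funext i
    have hi : (x i - y i).natAbs = 0 :=
      Finset.sum_eq_zero_iff.mp h0 i (Finset.mem_univ i)
    omega
  have hr1 : ∀ y ∈ S, 1 ≤ r y := by
    intro y hy
    exact Finset.card_pos.mpr ⟨y, Finset.mem_filter.mpr ⟨hy, Or.inr ⟨rfl, le_rfl⟩⟩⟩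
  have hrn : ∀ y ∈ S, r y ≤ S.card := fun y _ =>
    Finset.card_le_card (Finset.filter_subset _ _)
  have hball : ∀ y ∈ S, r y ≤ (3 * D y) ^ d := by
    intro y hy
    have h1 : r y ≤ (S.filter fun z => D z ≤ D y).card := by
      apply Finset.card_le_card
      intro z hz
      rw [Finset.mem_filter] at hz ⊢
      refine ⟨hz.1, ?_⟩
      rcases hz.2 with h | ⟨h, _⟩ <;> omega
    have h2 : (S.filter fun z => D z ≤ D y) ⊆
        Finset.Icc (fun i => x i - (D y : ℤ)) (fun i => x i + (D y : ℤ)) := by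
      intro z hz
      rw [Finset.mem_filter] at hz
      rw [Finset.mem_Icc]
      have key : ∀ i, (x i - z i).natAbs ≤ D y := by
        intro i
        calc (x i - z i).natAbs ≤ D z :=
              Finset.single_le_sum (f := fun i => (x i - z i).natAbs)
                (fun _ _ => Nat.zero_le _) (Finset.mem_univ i)
          _ ≤ D y := hz.2
      constructor <;> intro i <;> have := key i <;> simp only [] <;> omega
    have h3 : (Finset.Icc (fun i => x i - (D y : ℤ)) (fun i => x i + (D y : ℤ))).card
        = (2 * D y + 1) ^ d := by
      rw [Pi.card_Icc]
      have : ∀ i : Fin d, (Finset.Icc (x i - (D y : ℤ)) (x i + (D y : ℤ))).card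
          = 2 * D y + 1 := by
        intro i
        rw [Int.card_Icc]
        omega
      simp only [this, Finset.prod_const, Finset.card_univ, Fintype.card_fin]
    have h4 : (2 * D y + 1) ^ d ≤ (3 * D y) ^ d := by
      apply Nat.pow_le_pow_left
      have := hD1 y hy
      omega
    calc r y ≤ (S.filter fun z => D z ≤ D y).card := h1
      _ ≤ _ := Finset.card_le_card h2
      _ = (2 * D y + 1) ^ d := h3
      _ ≤ (3 * D y) ^ d := h4
  have hinj : ∀ a ∈ S, ∀ b ∈ S, r a = r b → a = b := by
    intro a ha b hb hab
    by_contra hne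
    have hee : e a ≠ e b := fun h => hne (e.injective h)
    rcases Nat.lt_trichotomy (D a) (D b) with h | h | h
    · exact absurd hab (Nat.ne_of_lt (rank_lt S D e hb (Or.inl h)))
    · rcases Nat.lt_or_ge (e a) (e b) with h2 | h2
      · exact absurd hab (Nat.ne_of_lt (rank_lt S D e hb (Or.inr ⟨h, h2⟩)))
      · have h3 : e b < e a := by omega
        exact absurd hab.symm (Nat.ne_of_lt (rank_lt S D e ha (Or.inr ⟨h.symm, h3⟩)))
    · exact absurd hab.symm (Nat.ne_of_lt (rank_lt S D e ha (Or.inl h)))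
  have hcard1 : 1 ≤ S.card := by
    have h := Finset.pred_card_le_card_erase (s := V) (a := x)
    have h2 : 1 ≤ V.card - 1 := by omega
    exact le_trans h2 h
  have hcardV : S.card ≤ V.card := Finset.card_le_card (Finset.erase_subset _ _)
  calc ∑ y ∈ V.erase x, (1 : ℝ) / (∑ i, ((x i - y i).natAbs : ℝ)) ^ d
      = ∑ y ∈ S, (1 : ℝ) / (D y : ℝ) ^ d := by
        apply Finset.sum_congr rfl
        intro y _
        congr 1
        push_cast [hDdef]
        ring
    _ ≤ ∑ y ∈ S, (3 : ℝ) ^ d * (1 / (r y : ℝ)) := by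
        apply Finset.sum_le_sum
        intro y hy
        have hDpos : (0:ℝ) < (D y : ℝ) ^ d := by
          have := hD1 y hy; positivity
        have hrpos : (0:ℝ) < (r y : ℝ) := by
          have := hr1 y hy; positivity
        rw [mul_one_div, div_le_div_iff₀ hDpos hrpos, one_mul]
        have : (r y : ℝ) ≤ ((3 * D y : ℕ) : ℝ) ^ d := by
          exact_mod_cast hball y hy
        push_cast at this
        calc (r y : ℝ) ≤ (3 * (D y : ℝ)) ^ d := this
          _ = 3 ^ d * (D y : ℝ) ^ d := mul_pow _ _ _
    _ = 3 ^ d * ∑ y ∈ S, (1 / (r y : ℝ)) := by rw [Finset.mul_sum]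
    _ ≤ 3 ^ d * (1 + Real.log V.card) := by
        apply mul_le_mul_of_nonneg_left _ (by positivity)
        calc ∑ y ∈ S, (1 / (r y : ℝ))
            = ∑ k ∈ S.image r, (1 / (k : ℝ)) := (Finset.sum_image (g := r) (f := fun k : ℕ => 1/(k:ℝ)) hinj).symm
          _ ≤ ∑ k ∈ Finset.Icc 1 S.card, (1 / (k : ℝ)) := by
              apply Finset.sum_le_sum_of_subset_of_nonneg
              · intro k hk
                obtain ⟨y, hy, rfl⟩ := Finset.mem_image.mp hk
                exact Finset.mem_Icc.mpr ⟨hr1 y hy, hrn y hy⟩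
              · intro k _ _; positivity
          _ = (harmonic S.card : ℝ) := by
              rw [harmonic_eq_sum_Icc]
              push_cast
              simp [one_div]
          _ ≤ 1 + Real.log S.card := harmonic_le_one_add_log _
          _ ≤ 1 + Real.log V.card := by
              have hle : (S.card : ℝ) ≤ (V.card : ℝ) := by exact_mod_cast hcardV
              have h1 : (1:ℝ) ≤ (S.card : ℝ) := by exact_mod_cast hcard1
              have := Real.log_le_log (by linarith) hle
              linarith
    _ ≤ 3 ^ d * (1 + 1 / Real.log 2) * Real.log V.card := by
        have hlogV : Real.log 2 ≤ Real.log V.card := by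
          apply Real.log_le_log (by norm_num)
          exact_mod_cast hV
        have h1 : (1:ℝ) + Real.log V.card ≤ (1 + 1 / Real.log 2) * Real.log V.card := by
          rw [add_mul, one_mul]
          have : (1:ℝ) ≤ 1 / Real.log 2 * Real.log V.card := by
            rw [div_mul_eq_mul_div, one_mul, le_div_iff₀ hlog2]
            linarith
          linarith
        calc (3:ℝ) ^ d * (1 + Real.log V.card)
            ≤ 3 ^ d * ((1 + 1 / Real.log 2) * Real.log V.card) := by
              apply mul_le_mul_of_nonneg_left h1 (by positivity)
          _ = 3 ^ d * (1 + 1 / Real.log 2) * Real.log V.card := by ring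
end

section
/- Let d ≥ 1 and let ‖·‖ denote the ℓ¹-norm. There exist constants c = c(d) > 0 and N₀ such that for all N ≥ N₀, for every x ∈ [N]^d = {0,...,N}^d and every V ⊆ [N]^d whose complement V^c = [N]^d \ V satisfies |V^c| ≤ N^d / 2, one has ∑_{y ∈ V, y ≠ x} ‖x - y‖^{-d} ≥ c log(N^d / |V^c|). -/
/-!
Let `Q(r)` be the cube of ℓ^∞-radius `r` about `x`, cut to the box: it has between `(r+1)^d` and
`(2r+1)^d` points, all at ℓ¹-distance `≤ d r` from `x`. So if `4 (|V^c| + (2r+1)^d) ≤ 3 R^d`, at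
least `R^d / 4` points of `V` lie in `Q(R) \ Q(r)`, and they carry weight `≥ 1/(4 d^d)`. This
applies to each of the disjoint annuli `Q(16^{j+1}) \ Q(16^j)` with
`log_{16^d} (4|V^c|) ≤ j < log_16 N`, and their number `m` satisfies `N^d ≤ 16^{d(m+2)} |V^c|`.
When `m = 0`, the single annulus `Q(N) \ {x}` still has weight `≥ 1/(4 d^d)` because
`|V^c| ≤ N^d/2`.
-/

namespace LatticeWeight

open Finset

variable {d N : ℕ}

noncomputable def box (d N : ℕ) : Finset (Fin d → ℤ) := Icc 0 (fun _ => (N : ℤ))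

noncomputable def cube (N : ℕ) (x : Fin d → ℤ) (r : ℕ) : Finset (Fin d → ℤ) :=
  Icc (fun i => max 0 (x i - r)) (fun i => min (N : ℤ) (x i + r))

noncomputable def annulus (N : ℕ) (x : Fin d → ℤ) (r R : ℕ) : Finset (Fin d → ℤ) :=
  cube N x R \ cube N x r

noncomputable def weight (x : Fin d → ℤ) (S : Finset (Fin d → ℤ)) : ℝ :=
  ∑ y ∈ S, 1 / (∑ i, ((x i - y i).natAbs : ℝ)) ^ d

section Cube

variable {x y : Fin d → ℤ} {r s : ℕ}

lemma mem_box : x ∈ box d N ↔ ∀ i, 0 ≤ x i ∧ x i ≤ N := by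
  simp [box, Pi.le_def, forall_and]

lemma mem_cube :
    y ∈ cube N x r ↔ ∀ i, max 0 (x i - r) ≤ y i ∧ y i ≤ min (N : ℤ) (x i + r) := by
  simp [cube, Pi.le_def, forall_and]

lemma cube_subset_box : cube N x r ⊆ box d N := fun _ hy =>
  mem_box.2 fun i => by have := mem_cube.1 hy i; omega

lemma self_mem_cube (hx : x ∈ box d N) : x ∈ cube N x r :=
  mem_cube.2 fun i => by have := mem_box.1 hx i; omega

lemma cube_mono (h : r ≤ s) : cube N x r ⊆ cube N x s := fun _ hy =>
  mem_cube.2 fun i => by have := mem_cube.1 hy i; omega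

lemma card_cube_le : #(cube N x r) ≤ (2 * r + 1) ^ d := by
  rw [cube, Pi.card_Icc]
  calc ∏ i, #(Icc (max 0 (x i - r)) (min (N : ℤ) (x i + r))) ≤ ∏ _i : Fin d, (2 * r + 1) :=
        prod_le_prod' fun i _ => by rw [Int.card_Icc]; omega
    _ = (2 * r + 1) ^ d := by simp

lemma pow_le_card_cube (hx : x ∈ box d N) (hr : r ≤ N) : (r + 1) ^ d ≤ #(cube N x r) := by
  rw [cube, Pi.card_Icc]
  calc (r + 1) ^ d = ∏ _i : Fin d, (r + 1) := by simp
    _ ≤ ∏ i, #(Icc (max 0 (x i - r)) (min (N : ℤ) (x i + r))) :=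
        prod_le_prod' fun i _ => by rw [Int.card_Icc]; have := mem_box.1 hx i; omega

lemma sum_natAbs_le_of_mem_cube (hy : y ∈ cube N x r) :
    ∑ i, ((x i - y i).natAbs : ℝ) ≤ d * r := by
  calc ∑ i, ((x i - y i).natAbs : ℝ) ≤ ∑ _i : Fin d, (r : ℝ) :=
        sum_le_sum fun i _ => by
          have := mem_cube.1 hy i
          exact_mod_cast (show (x i - y i).natAbs ≤ r by omega)
    _ = d * r := by simp

lemma sum_natAbs_pos (hyx : y ≠ x) : 0 < ∑ i, ((x i - y i).natAbs : ℝ) := by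
  obtain ⟨i, hi⟩ := Function.ne_iff.1 hyx
  exact sum_pos' (fun _ _ => by positivity)
    ⟨i, mem_univ i, by simpa [sub_eq_zero] using hi.symm⟩

end Cube

section Weight

variable {x : Fin d → ℤ} {S T : Finset (Fin d → ℤ)}

lemma weight_nonneg : 0 ≤ weight x S := sum_nonneg fun _ _ => by positivity

lemma weight_mono (h : S ⊆ T) : weight x S ≤ weight x T :=
  sum_le_sum_of_subset_of_nonneg h fun _ _ _ => by positivity

lemma card_div_le_weight {D : ℝ}
    (hS : ∀ y ∈ S, y ≠ x ∧ ∑ i, ((x i - y i).natAbs : ℝ) ≤ D) :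
    #S / D ^ d ≤ weight x S := by
  have h := card_nsmul_le_sum S _ (1 / D ^ d) fun y hy =>
    one_div_le_one_div_of_le (pow_pos (sum_natAbs_pos (hS y hy).1) d)
      (pow_le_pow_left₀ (sum_nonneg fun _ _ => by positivity) (hS y hy).2 d)
  rwa [nsmul_eq_mul, ← div_eq_mul_one_div] at h

end Weight

section Annulus

variable {x : Fin d → ℤ} {V : Finset (Fin d → ℤ)} {r R : ℕ}

lemma disjoint_annulus {r' R' : ℕ} (h : R ≤ r') :
    Disjoint (annulus N x r R) (annulus N x r' R') :=
  disjoint_left.2 fun _ hy hy' =>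
    (mem_sdiff.1 hy').2 (cube_mono h (mem_sdiff.1 hy).1)

open Function in
lemma pairwise_disjoint_annulus {ρ : ℕ → ℕ} (hρ : Monotone ρ) :
    Pairwise (Disjoint on fun j => annulus N x (ρ j) (ρ (j + 1))) := by
  intro i j hij
  rcases hij.lt_or_gt with h | h
  · exact disjoint_annulus (hρ h)
  · exact (disjoint_annulus (hρ h)).symm

lemma ne_of_mem_annulus {y : Fin d → ℤ} (hx : x ∈ box d N) (hy : y ∈ annulus N x r R) :
    y ≠ x := by
  rintro rfl
  exact (mem_sdiff.1 hy).2 (self_mem_cube hx)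

lemma annulus_inter_subset_erase (hx : x ∈ box d N) : annulus N x r R ∩ V ⊆ V.erase x :=
  fun _ hy => mem_erase.2 ⟨ne_of_mem_annulus hx (mem_inter.1 hy).1, (mem_inter.1 hy).2⟩

lemma card_annulus_inter (hx : x ∈ box d N) (hR : R ≤ N) :
    (R + 1) ^ d ≤ #(annulus N x r R ∩ V) + #(box d N \ V) + (2 * r + 1) ^ d := by
  have h_outer := pow_le_card_cube (r := R) hx hR
  have h_inner := card_cube_le (N := N) (x := x) (r := r)
  have h_diff := le_card_sdiff (cube N x r) (cube N x R)
  have h_split := card_inter_add_card_sdiff (annulus N x r R) V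
  have h_out : #(annulus N x r R \ V) ≤ #(box d N \ V) :=
    card_le_card (sdiff_subset_sdiff (sdiff_subset.trans cube_subset_box) le_rfl)
  rw [annulus] at h_split h_out ⊢
  omega

lemma one_div_le_weight_annulus (hx : x ∈ box d N) (hR : R ≤ N)
    (h : 4 * (#(box d N \ V) + (2 * r + 1) ^ d) ≤ 3 * R ^ d) :
    1 / (4 * d ^ d) ≤ weight x (annulus N x r R ∩ V) := by
  have h_card : R ^ d ≤ 4 * #(annulus N x r R ∩ V) := by
    have := card_annulus_inter (V := V) (r := r) hx hR
    have := Nat.pow_le_pow_left (show R ≤ R + 1 by omega) d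
    omega
  have hR_pos : (0 : ℝ) < R ^ d := by
    have := pow_pos (show 0 < 2 * r + 1 by omega) d
    exact_mod_cast (show 0 < R ^ d by omega)
  have h_weight :=
    card_div_le_weight (x := x) (S := annulus N x r R ∩ V) (D := d * R) fun _ hy =>
      ⟨ne_of_mem_annulus hx (mem_inter.1 hy).1,
        sum_natAbs_le_of_mem_cube (mem_sdiff.1 (mem_inter.1 hy).1).1⟩
  calc 1 / (4 * d ^ d : ℝ) = (R ^ d / 4) / (d * R) ^ d := by
        rw [mul_pow]; field_simp
    _ ≤ #(annulus N x r R ∩ V) / (d * R) ^ d := by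
        gcongr
        rw [div_le_iff₀ four_pos]
        exact_mod_cast (show R ^ d ≤ #(annulus N x r R ∩ V) * 4 by omega)
    _ ≤ _ := h_weight

end Annulus

lemma four_mul_pow_le_pow {a b : ℕ} (hd : 1 ≤ d) (h : 4 * a ≤ b) : 4 * a ^ d ≤ b ^ d :=
  calc 4 * a ^ d ≤ 4 ^ d * a ^ d := Nat.mul_le_mul_right _ (Nat.le_self_pow (by omega) 4)
    _ = (4 * a) ^ d := (mul_pow 4 a d).symm
    _ ≤ b ^ d := Nat.pow_le_pow_left h d

lemma pow_le_pow_log_sub_log_mul {k : ℕ} (hd : 1 ≤ d) (hk : k ≠ 0) :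
    N ^ d ≤ 16 ^ (d * (Nat.log 16 N - Nat.log (16 ^ d) (4 * k) + 2)) * k := by
  set L := Nat.log 16 N
  set j₀ := Nat.log (16 ^ d) (4 * k)
  have h16 : 4 ≤ 16 ^ d := (Nat.le_self_pow (by omega) 16).trans' (by norm_num)
  calc N ^ d ≤ (16 ^ (L + 1)) ^ d :=
        Nat.pow_le_pow_left (Nat.lt_pow_succ_log_self (by norm_num) N).le d
    _ = (16 ^ d) ^ (L + 1) := pow_right_comm ..
    _ ≤ (16 ^ d) ^ ((L - j₀ + 1) + j₀) := Nat.pow_le_pow_right (by positivity) (by omega)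
    _ = (16 ^ d) ^ (L - j₀ + 1) * (16 ^ d) ^ j₀ := pow_add ..
    _ ≤ (16 ^ d) ^ (L - j₀ + 1) * (4 * k) :=
        Nat.mul_le_mul_left _ (Nat.pow_log_le_self _ (by omega))
    _ ≤ (16 ^ d) ^ (L - j₀ + 1) * (16 ^ d * k) :=
        Nat.mul_le_mul_left _ (Nat.mul_le_mul_right _ h16)
    _ = 16 ^ (d * (L - j₀ + 2)) * k := by rw [pow_mul]; ring

section Scales

variable {x : Fin d → ℤ} {V : Finset (Fin d → ℤ)}

lemma one_div_le_weight_erase (hd : 1 ≤ d) (hx : x ∈ box d N) (hN : 4 ≤ N)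
    (hV : 2 * #(box d N \ V) ≤ N ^ d) : 1 / (4 * d ^ d) ≤ weight x (V.erase x) := by
  have hN_pow := four_mul_pow_le_pow hd (show 4 * 1 ≤ N by omega)
  rw [one_pow] at hN_pow
  have h_big : 4 * (#(box d N \ V) + (2 * 0 + 1) ^ d) ≤ 3 * N ^ d := by
    rw [mul_zero, zero_add, one_pow]; omega
  exact (one_div_le_weight_annulus hx le_rfl h_big).trans
    (weight_mono (annulus_inter_subset_erase hx))

lemma num_scales_div_le_weight_erase (hd : 1 ≤ d) (hx : x ∈ box d N) :
    ((Nat.log 16 N - Nat.log (16 ^ d) (4 * #(box d N \ V)) : ℕ) / (4 * d ^ d) : ℝ)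
      ≤ weight x (V.erase x) := by
  set k := #(box d N \ V)
  set J := Ico (Nat.log (16 ^ d) (4 * k)) (Nat.log 16 N)
  set A : ℕ → Finset (Fin d → ℤ) := fun j => annulus N x (16 ^ j) (16 ^ (j + 1)) ∩ V
  have h_good : ∀ j ∈ J, 1 / (4 * d ^ d : ℝ) ≤ weight x (A j) := by
    intro j hj
    obtain ⟨hj₀, hjL⟩ := mem_Ico.1 hj
    have hR : 16 ^ (j + 1) ≤ N := Nat.pow_le_of_le_log (by rintro rfl; simp at hjL) hjL
    have hk : 4 * k < (16 ^ (j + 1)) ^ d :=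
      calc 4 * k < (16 ^ d) ^ (Nat.log (16 ^ d) (4 * k) + 1) :=
            Nat.lt_pow_succ_log_self (Nat.one_lt_pow (by omega) (by norm_num)) _
        _ ≤ (16 ^ d) ^ (j + 1) := Nat.pow_le_pow_right (by positivity) (by omega)
        _ = (16 ^ (j + 1)) ^ d := pow_right_comm ..
    have hr := four_mul_pow_le_pow hd (show 4 * (2 * 16 ^ j + 1) ≤ 16 ^ (j + 1) by
      rw [pow_succ]; have := Nat.one_le_pow j 16 (by norm_num); omega)
    exact one_div_le_weight_annulus hx hR (by omega)
  have h_disj : (J : Set ℕ).PairwiseDisjoint A := fun i _ j _ hij =>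
    ((pairwise_disjoint_annulus (pow_right_mono₀ (by norm_num : 1 ≤ 16)) hij).mono
      inter_subset_left inter_subset_left :)
  calc _ = ∑ _j ∈ J, 1 / (4 * d ^ d : ℝ) := by
        rw [sum_const, Nat.card_Ico, nsmul_eq_mul, div_eq_mul_one_div]
    _ ≤ ∑ j ∈ J, weight x (A j) := sum_le_sum h_good
    _ = weight x (J.biUnion A) := (sum_biUnion h_disj).symm
    _ ≤ weight x (V.erase x) :=
        weight_mono (biUnion_subset.2 fun _ _ => annulus_inter_subset_erase hx)

theorem log_div_le_weight_erase (hd : 1 ≤ d) (hN : 4 ≤ N) (hx : x ∈ box d N)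
    (hV : (#(box d N \ V) : ℝ) ≤ N ^ d / 2) :
    1 / (12 * d ^ (d + 1) * Real.log 16) * Real.log (N ^ d / #(box d N \ V))
      ≤ weight x (V.erase x) := by
  set k := #(box d N \ V)
  obtain hk | hk := eq_or_ne k 0
  · -- `N ^ d / 0 = 0` and `log 0 = 0`
    simpa [hk] using weight_nonneg
  set m := Nat.log 16 N - Nat.log (16 ^ d) (4 * k)
  have h_weight : (max m 1 : ℕ) / (4 * d ^ d : ℝ) ≤ weight x (V.erase x) := by
    rcases le_total m 1 with h | h
    · rw [max_eq_right h, Nat.cast_one]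
      exact one_div_le_weight_erase hd hx hN
        (by exact_mod_cast (by linarith : (2 * k : ℝ) ≤ N ^ d))
    · rw [max_eq_left h]
      exact num_scales_div_le_weight_erase hd hx
  have h_log : Real.log (N ^ d / k) ≤ 3 * d * (max m 1 : ℕ) * Real.log 16 := by
    have h_pow : (N ^ d : ℝ) ≤ 16 ^ (d * (m + 2)) * k := by
      exact_mod_cast pow_le_pow_log_sub_log_mul hd hk
    have h_m : (m : ℝ) + 2 ≤ 3 * (max m 1 : ℕ) := by
      have : (m : ℝ) ≤ (max m 1 : ℕ) := by exact_mod_cast le_max_left m 1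
      have : (1 : ℝ) ≤ (max m 1 : ℕ) := by exact_mod_cast le_max_right m 1
      linarith
    calc Real.log (N ^ d / k) ≤ Real.log (16 ^ (d * (m + 2))) :=
          Real.log_le_log (by positivity) ((div_le_iff₀ (by positivity)).2 h_pow)
      _ = d * (m + 2) * Real.log 16 := by rw [Real.log_pow]; push_cast; ring
      _ ≤ d * (3 * (max m 1 : ℕ)) * Real.log 16 := by gcongr
      _ = _ := by ring
  calc _ ≤ 1 / (12 * d ^ (d + 1) * Real.log 16) * (3 * d * (max m 1 : ℕ) * Real.log 16) := by
        gcongr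
    _ = (max m 1 : ℕ) / (4 * d ^ d : ℝ) := by
        have := Real.log_pos (by norm_num : (1 : ℝ) < 16)
        field_simp
        ring
    _ ≤ _ := h_weight

end Scales

end LatticeWeight

open LatticeWeight in
/-- Lower bound on the weight of a site relative to a set `V ⊆ [N]^d` whose
complement is at most half the box: `∑_{y ∈ V, y ≠ x} ‖x-y‖₁^{-d} ≥ c log(N^d/|V^c|)`. -/
theorem stmt_3 (d : ℕ) (hd : 1 ≤ d) :
    ∃ c : ℝ, 0 < c ∧ ∃ N₀ : ℕ, ∀ N : ℕ, N₀ ≤ N →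
      ∀ x ∈ Finset.Icc (0 : Fin d → ℤ) (fun _ => (N : ℤ)),
        ∀ V ⊆ Finset.Icc (0 : Fin d → ℤ) (fun _ => (N : ℤ)),
          ((Finset.Icc (0 : Fin d → ℤ) (fun _ => (N : ℤ)) \ V).card : ℝ)
              ≤ (N : ℝ) ^ d / 2 →
            c * Real.log ((N : ℝ) ^ d /
                ((Finset.Icc (0 : Fin d → ℤ) (fun _ => (N : ℤ)) \ V).card : ℝ))
              ≤ ∑ y ∈ V.erase x, (1 : ℝ) / (∑ i, ((x i - y i).natAbs : ℝ)) ^ d :=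
  ⟨_, by have := Real.log_pos (by norm_num : (1 : ℝ) < 16); positivity, 4,
    fun _ hN _ hx _ _ hV => log_div_le_weight_erase hd hN hx hV⟩
end
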